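/- Let A be a finitely generated additive abelian group, T its torsion subgroup, and ℂ/ℤ := ℂ ⧸ (ℤ·1). Consider the map α : (A →+ ℂ) → (A →+ ℂ/ℤ) given by post-composition with the quotient map ℂ → ℂ/ℤ, and the map ρ : (A →+ ℂ/ℤ) → (T →+ ℂ/ℤ) given by restriction to T. Then ρ is surjective and the kernel of ρ equals the range of α; that is, the sequence Hom(A, ℂ) → Hom(A, ℂ/ℤ) → Hom(T, ℂ/ℤ) → 0 is exact. -/

import Mathlib

noncomputable instance : DivisibleBy ℂ ℕ := AddGroup.divisibleByNatOfDivisibleByInt ℂ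

noncomputable instance : DivisibleBy (ℂ ⧸ AddSubgroup.zmultiples (1 : ℂ)) ℤ :=
  AddGroup.divisibleByIntOfDivisibleByNat _

/-- The algebraic core of the proof of the Claim in Section 3 of the paper.  Let `A` be a
finitely generated abelian group with torsion subgroup `T = AddCommGroup.torsion A`, and let
`ℂ/ℤ = ℂ ⧸ ℤ·1`.  Restriction to `T` of characters `A →+ ℂ/ℤ` is surjective, and a character
restricts to zero on `T` exactly when it lifts to a homomorphism `A →+ ℂ` (i.e. lies in the
range of post-composition with the quotient map `ℂ → ℂ/ℤ`).  In other words the sequence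
`Hom(A, ℂ) → Hom(A, ℂ/ℤ) → Hom(T, ℂ/ℤ) → 0` is exact. -/
theorem hom_complex_mod_int_exact_at_torsion
    {A : Type*} [AddCommGroup A] [AddGroup.FG A] :
    Function.Surjective
      (fun φ : A →+ ℂ ⧸ AddSubgroup.zmultiples (1 : ℂ) =>
        φ.comp (AddCommGroup.torsion A).subtype) ∧
    ∀ φ : A →+ ℂ ⧸ AddSubgroup.zmultiples (1 : ℂ),
      φ.comp (AddCommGroup.torsion A).subtype = 0 ↔
      ∃ f : A →+ ℂ,
        (QuotientAddGroup.mk' (AddSubgroup.zmultiples (1 : ℂ))).comp f = φ := by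
  set Q := ℂ ⧸ AddSubgroup.zmultiples (1 : ℂ)
  have hBaer : Module.Baer ℤ Q := Module.Baer.of_divisible Q
  constructor
  · -- surjectivity of restriction, via injectivity (divisibility) of ℂ/ℤ
    intro ψ
    obtain ⟨h, hh⟩ := hBaer.extension_property_addMonoidHom
      (AddCommGroup.torsion A).subtype Subtype.val_injective ψ
    exact ⟨h, hh⟩
  · intro φ
    constructor
    · intro hφ
      -- φ vanishes on the torsion submodule
      have hker : Submodule.torsion ℤ A ≤ LinearMap.ker φ.toIntLinearMap := by
        intro x hx
        have hx' : x ∈ AddCommGroup.torsion A := by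
          rw [← Submodule.torsion_int]; exact hx
        exact LinearMap.mem_ker.mpr (by simpa using DFunLike.congr_fun hφ (⟨x, hx'⟩ : AddCommGroup.torsion A))
      -- descend to the torsion-free quotient
      set φ' : (A ⧸ Submodule.torsion ℤ A) →ₗ[ℤ] Q :=
        Submodule.liftQ _ φ.toIntLinearMap hker
      haveI : Module.Finite ℤ A := Module.Finite.iff_addGroup_fg.mpr ‹AddGroup.FG A›
      haveI : Module.Free ℤ (A ⧸ Submodule.torsion ℤ A) := inferInstance
      -- lift along the surjection ℂ → ℂ/ℤ using projectivity of the free quotient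
      obtain ⟨g, hg⟩ := Module.projective_lifting_property
        (QuotientAddGroup.mk' (AddSubgroup.zmultiples (1 : ℂ))).toIntLinearMap φ'
        (QuotientAddGroup.mk'_surjective _)
      refine ⟨(g ∘ₗ (Submodule.torsion ℤ A).mkQ).toAddMonoidHom, ?_⟩
      ext a
      have := DFunLike.congr_fun hg ((Submodule.torsion ℤ A).mkQ a)
      simpa [φ'] using this
    · rintro ⟨f, rfl⟩
      ext t
      have ht : IsOfFinAddOrder (t : A) := t.2
      have hn : addOrderOf (t : A) ≠ 0 := ht.addOrderOf_pos.ne'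
      have h0 : (addOrderOf (t : A)) • f (t : A) = 0 := by
        rw [← map_nsmul, addOrderOf_nsmul_eq_zero, map_zero]
      have : f (t : A) = 0 := by
        have := h0
        rw [nsmul_eq_mul] at this
        rcases mul_eq_zero.mp this with h | h
        · exact absurd (Nat.cast_eq_zero.mp h) hn
        · exact h
      simp [this]
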